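/- Let S_∞ = ∑_{k=1}^∞ 2^{-k} Z_k with (Z_k) i.i.d. Exp(1), and for 0 ≤ η ≤ 1 let Q_η be the distribution of ⌊−log₂ S_∞ + η⌋. Then for every ρ < (log 2)/2, Q_η([x, ∞)) = o(exp(−ρ x²)) as x → ∞. -/

import Mathlib

open MeasureTheory ProbabilityTheory Filter Real

/-!
If `⌊-log₂ S_∞ + η⌋ ≥ x` then `S_∞ ≤ 2^(η - x)`, so every summand satisfies
`Z_k ≤ 2^(k + 1 + η - x) ≤ 2^(k + 2 - x)`. Since `ℙ(Z_k ≤ c) ≤ c` for an `Exp(1)` variable,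
independence of `Z_0, …, Z_{⌊x⌋ - 1}` bounds the tail by `∏_{k < ⌊x⌋} 2^(k + 2 - x)`,
which is `2^(-x²/2 + O(x))`.
-/

lemma expMeasure_Iic_le {r : ℝ} (hr : 0 < r) (c : ℝ) :
    expMeasure r (Set.Iic c) ≤ ENNReal.ofReal (r * c) := by
  have := isProbabilityMeasure_expMeasure hr
  rw [← ofReal_cdf, cdf_expMeasure_eq hr]
  rcases le_or_gt 0 c with hc | hc
  · rw [if_pos hc]
    exact ENNReal.ofReal_le_ofReal (by linarith [add_one_le_exp (-(r * c))])
  · simp [if_neg hc.not_ge]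

section ExponentialLaw

variable {Ω : Type*} [MeasurableSpace Ω] {μ : Measure Ω} {W : Ω → ℝ} {r : ℝ}

lemma measure_preimage_Iic_le_of_map_eq_expMeasure (hW : μ.map W = expMeasure r) (hr : 0 < r)
    (c : ℝ) : μ (W ⁻¹' Set.Iic c) ≤ ENNReal.ofReal (r * c) := by
  have := isProbabilityMeasure_expMeasure hr
  have hWm : AEMeasurable W μ :=
    .of_map_ne_zero (hW ▸ IsProbabilityMeasure.ne_zero (expMeasure r))
  rw [← Measure.map_apply_of_aemeasurable hWm measurableSet_Iic, hW]
  exact expMeasure_Iic_le hr c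

lemma ae_nonneg_of_map_eq_expMeasure (hW : μ.map W = expMeasure r) (hr : 0 < r) :
    ∀ᵐ ω ∂μ, 0 ≤ W ω := by
  have hneg : μ (W ⁻¹' Set.Iic 0) = 0 := by
    simpa using measure_preimage_Iic_le_of_map_eq_expMeasure hW hr 0
  exact measure_mono_null (fun ω (hω : ¬0 ≤ W ω) => show W ω ≤ 0 from (not_le.mp hω).le) hneg

end ExponentialLaw

lemma le_rpow_of_logb_tsum_le {a : ℕ → ℝ} (ha : ∀ k, 0 ≤ a k) {t : ℝ} (ht : t < 0)
    (h : logb 2 (∑' k, a k) ≤ t) (k : ℕ) : a k ≤ 2 ^ t := by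
  -- A vanishing or divergent series would give `logb 2 0 = 0 > t`.
  have hpos : 0 < ∑' k, a k := by
    refine (tsum_nonneg ha).lt_of_ne fun h0 => ?_
    rw [← h0, logb_zero] at h
    linarith
  have hsum : Summable a := by
    by_contra hns
    rw [tsum_eq_zero_of_not_summable hns] at hpos
    exact hpos.false
  exact (hsum.le_tsum k fun j _ => ha j).trans ((logb_le_iff_le_rpow one_lt_two hpos).mp h)

lemma le_two_rpow_of_le_floor_neg_logb {z : ℕ → ℝ} (hz : ∀ k, 0 ≤ z k) {η x : ℝ} (hη : η ≤ 1)
    (hx : 1 < x) (h : x ≤ ⌊-logb 2 (∑' k : ℕ, (2 : ℝ) ^ (-((k : ℤ) + 1)) * z k) + η⌋)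
    (k : ℕ) : z k ≤ 2 ^ ((k : ℝ) + 2 - x) := by
  have hk : (2 : ℝ) ^ (-((k : ℤ) + 1)) * z k ≤ 2 ^ (η - x) :=
    le_rpow_of_logb_tsum_le (a := fun j => (2 : ℝ) ^ (-((j : ℤ) + 1)) * z j) (fun k => mul_nonneg (by positivity) (hz k)) (by linarith)
      (by linarith [h.trans (Int.floor_le _)]) k
  calc z k = 2 ^ ((k : ℝ) + 1) * ((2 : ℝ) ^ (-((k : ℤ) + 1)) * z k) := by
        rw [← mul_assoc, ← rpow_intCast, ← rpow_add two_pos]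
        push_cast
        simp
    _ ≤ 2 ^ ((k : ℝ) + 1) * 2 ^ (η - x) := by gcongr
    _ = 2 ^ ((k : ℝ) + 1 + (η - x)) := (rpow_add two_pos _ _).symm
    _ ≤ 2 ^ ((k : ℝ) + 2 - x) := rpow_le_rpow_of_exponent_le one_le_two (by linarith)

lemma sum_range_add_const (n : ℕ) (c : ℝ) :
    ∑ k ∈ Finset.range n, ((k : ℝ) + c) = n * (n - 1) / 2 + n * c := by
  induction n with
  | zero => simp
  | succ m ih =>
    rw [Finset.sum_range_succ, ih]
    push_cast
    ring

lemma sum_range_floor_add_two_sub_le {x : ℝ} (hx : 0 ≤ x) :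
    ∑ k ∈ Finset.range ⌊x⌋₊, ((k : ℝ) + 2 - x) ≤ (3 * x - x ^ 2) / 2 := by
  have hle := Nat.floor_le hx
  have hlt := Nat.lt_floor_add_one x
  simp_rw [add_sub_assoc]
  rw [sum_range_add_const]
  nlinarith [mul_nonneg (sub_nonneg.mpr hle) (by linarith : (0 : ℝ) ≤ 3 - (x - ⌊x⌋₊))]

lemma measure_le_floor_neg_logb_tsum_le {Ω : Type*} [MeasurableSpace Ω] {μ : Measure Ω}
    {Z : ℕ → Ω → ℝ} (hindep : iIndepFun Z μ) (hexp : ∀ k, μ.map (Z k) = expMeasure 1)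
    {η : ℝ} (hη : η ≤ 1) {x : ℝ} (hx : 1 < x) :
    μ {ω | x ≤ (⌊-logb 2 (∑' k : ℕ, (2 : ℝ) ^ (-((k : ℤ) + 1)) * Z k ω) + η⌋ : ℝ)}
      ≤ ENNReal.ofReal (2 ^ ((3 * x - x ^ 2) / 2)) := by
  have hnonneg : ∀ᵐ ω ∂μ, ∀ k, 0 ≤ Z k ω :=
    ae_all_iff.mpr fun k => ae_nonneg_of_map_eq_expMeasure (hexp k) one_pos
  calc _ ≤ μ (⋂ k ∈ Finset.range ⌊x⌋₊, Z k ⁻¹' Set.Iic (2 ^ ((k : ℝ) + 2 - x))) := by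
        refine measure_mono_ae ?_
        filter_upwards [hnonneg] with ω hω hE
        exact Set.mem_iInter₂.mpr fun k _ => le_two_rpow_of_le_floor_neg_logb hω hη hx hE k
    _ = ∏ k ∈ Finset.range ⌊x⌋₊, μ (Z k ⁻¹' Set.Iic (2 ^ ((k : ℝ) + 2 - x))) :=
        hindep.meas_biInter fun k _ => ⟨Set.Iic _, measurableSet_Iic, rfl⟩
    _ ≤ ∏ k ∈ Finset.range ⌊x⌋₊, ENNReal.ofReal (2 ^ ((k : ℝ) + 2 - x)) :=
        Finset.prod_le_prod' fun k _ => by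
          simpa using measure_preimage_Iic_le_of_map_eq_expMeasure (hexp k) one_pos _
    _ = ENNReal.ofReal (2 ^ ∑ k ∈ Finset.range ⌊x⌋₊, ((k : ℝ) + 2 - x)) := by
        rw [← ENNReal.ofReal_prod_of_nonneg fun _ _ => by positivity, rpow_sum_of_pos two_pos]
    _ ≤ ENNReal.ofReal (2 ^ ((3 * x - x ^ 2) / 2)) :=
        ENNReal.ofReal_le_ofReal <| rpow_le_rpow_of_exponent_le one_le_two <|
          sum_range_floor_add_two_sub_le (by linarith)

lemma isLittleO_exp_neg_mul_sq_add {a ρ : ℝ} (hρ : ρ < a) (b : ℝ) :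
    (fun x : ℝ => exp (-a * x ^ 2 + b * x)) =o[atTop] fun x => exp (-ρ * x ^ 2) := by
  rw [isLittleO_exp_comp_exp_comp]
  have : Tendsto (fun x : ℝ => x * ((a - ρ) * x - b)) atTop atTop :=
    tendsto_id.atTop_mul_atTop₀ <|
      tendsto_atTop_add_const_right _ _ (tendsto_id.const_mul_atTop (by linarith))
  exact this.congr fun x => by ring

theorem stmt11_general {Ω : Type*} [MeasureSpace Ω]
    (Z : ℕ → Ω → ℝ)
    (hindep : iIndepFun Z ℙ)
    (hexp : ∀ k, Measure.map (Z k) ℙ = expMeasure 1)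
    (η : ℝ) (hη1 : η ≤ 1) (ρ : ℝ) (hρ : ρ < Real.log 2 / 2) :
    (fun x : ℝ =>
        (ℙ {ω | x ≤ (⌊-Real.logb 2 (∑' k : ℕ, (2 : ℝ) ^ (-((k : ℤ) + 1)) * Z k ω) + η⌋ : ℝ)}).toReal)
      =o[atTop] fun x : ℝ => Real.exp (-ρ * x ^ 2) := by
  refine Asymptotics.IsBigO.trans_isLittleO (g := fun x : ℝ =>
    exp (-(log 2 / 2) * x ^ 2 + 3 * log 2 / 2 * x)) ?_ (isLittleO_exp_neg_mul_sq_add hρ _)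
  refine Asymptotics.IsBigO.of_bound 1 ?_
  filter_upwards [eventually_gt_atTop 1] with x hx
  rw [one_mul, norm_of_nonneg ENNReal.toReal_nonneg, norm_of_nonneg (exp_nonneg _)]
  calc _ ≤ (2 : ℝ) ^ ((3 * x - x ^ 2) / 2) := ENNReal.toReal_le_of_le_ofReal (by positivity)
        (measure_le_floor_neg_logb_tsum_le hindep hexp hη1 hx)
    _ = _ := by
        rw [rpow_def_of_pos two_pos]
        ring_nf

/-- For `S_∞ = ∑_{k=1}^∞ 2^{-k} Z_k` with `(Z k)` i.i.d. `Exp(1)` and `Q_η` the law of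
`⌊−log₂ S_∞ + η⌋`, one has `Q_η([x,∞)) = o(exp(−ρ x²))` as `x → ∞` for every
`ρ < (log 2)/2`. -/
theorem stmt11 {Ω : Type*} [MeasureSpace Ω] [IsProbabilityMeasure (ℙ : Measure Ω)]
    (Z : ℕ → Ω → ℝ) (hmeas : ∀ k, Measurable (Z k))
    (hindep : iIndepFun Z ℙ)
    (hexp : ∀ k, Measure.map (Z k) ℙ = expMeasure 1)
    (η : ℝ) (hη0 : 0 ≤ η) (hη1 : η ≤ 1) (ρ : ℝ) (hρ : ρ < Real.log 2 / 2) :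
    (fun x : ℝ =>
        (ℙ {ω | x ≤ (⌊-Real.logb 2 (∑' k : ℕ, (2 : ℝ) ^ (-((k : ℤ) + 1)) * Z k ω) + η⌋ : ℝ)}).toReal)
      =o[atTop] fun x : ℝ => Real.exp (-ρ * x ^ 2) :=
  stmt11_general Z hindep hexp η hη1 ρ hρ
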